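/- arXiv:2408.00746 — 9 statements merged into one kernel-verified Lean document; each statement's English description precedes it below -/
import Mathlib

section
/- The function f : [0,1) → ℝ defined by f(ρ) = (1/ρ) · log((1-ρ)/(1+ρ)) for ρ ∈ (0,1), extended by continuity to f(0) = -2, is concave on [0,1). -/
lemma key_hasSum (ρ : ℝ) (h0 : 0 ≤ ρ) (h1 : ρ < 1) :
    HasSum (fun k : ℕ => -(2 * (1 / (2 * (k : ℝ) + 1))) * ρ ^ (2 * k))
      (if ρ = 0 then (-2 : ℝ) else ρ⁻¹ * Real.log ((1 - ρ) / (1 + ρ))) := by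
  by_cases hz : ρ = 0
  · subst hz
    rw [if_pos rfl]
    have : (-2 : ℝ) = -(2 * (1 / (2 * ((0 : ℕ) : ℝ) + 1))) * (0 : ℝ) ^ (2 * 0) := by norm_num
    rw [this]
    apply hasSum_single (0 : ℕ)
    intro k hk
    have : 2 * k ≠ 0 := by omega
    simp [zero_pow this]
  · rw [if_neg hz]
    have habs : |ρ| < 1 := abs_lt.2 ⟨by linarith, h1⟩
    have h := (Real.hasSum_log_sub_log_of_abs_lt_one habs).mul_left (-ρ⁻¹)
    have hval : -ρ⁻¹ * (Real.log (1 + ρ) - Real.log (1 - ρ))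
        = ρ⁻¹ * Real.log ((1 - ρ) / (1 + ρ)) := by
      rw [Real.log_div (by linarith) (by linarith)]
      ring
    rw [hval] at h
    convert h using 2 with k
    case e'_3 => rfl
    rw [pow_succ]
    field_simp

/-- The function `f(ρ) = (1/ρ) log((1-ρ)/(1+ρ))` for `ρ ∈ (0,1)`, extended by
continuity to `f(0) = -2`, is concave on `[0,1)`. -/
theorem stmt_1 :
    ConcaveOn ℝ (Set.Ico (0 : ℝ) 1)
      (fun ρ => if ρ = 0 then (-2 : ℝ) else ρ⁻¹ * Real.log ((1 - ρ) / (1 + ρ))) := by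
  refine ⟨convex_Ico 0 1, ?_⟩
  intro x hx y hy a b ha hb hab
  have hxy : a • x + b • y ∈ Set.Ico (0 : ℝ) 1 := (convex_Ico 0 1) hx hy ha hb hab
  have hsx := key_hasSum x hx.1 hx.2
  have hsy := key_hasSum y hy.1 hy.2
  have hsz := key_hasSum (a • x + b • y) hxy.1 hxy.2
  simp only [smul_eq_mul] at *
  refine hasSum_le (fun k => ?_) ((hsx.mul_left a).add (hsy.mul_left b)) hsz
  have hc : (0 : ℝ) ≤ 2 * (1 / (2 * (k : ℝ) + 1)) := by positivity
  have hpow : (a * x + b * y) ^ (2 * k) ≤ a * x ^ (2 * k) + b * y ^ (2 * k) := by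
    have := (Even.convexOn_pow (n := 2 * k) ⟨k, by ring⟩).2
      (Set.mem_univ x) (Set.mem_univ y) ha hb hab
    simpa using this
  nlinarith [hpow]
end

section
/- Let Z1, Z2 be jointly standard Gaussian random variables with correlation ρ ∈ [0,1). For any t > 0 and y ∈ ℝ, define p = P(|Z1 - y| ≤ t) and q = P(|Z1 - y| ≤ t and |Z2 - y| ≤ t). Then q/p ≤ √((1+ρ)/(1-ρ)) · exp(ρ y²). -/
open MeasureTheory Real Set

/-- For jointly standard Gaussian `Z1, Z2` with correlation `ρ ∈ [0,1)`, any
`t > 0` and `y ∈ ℝ`, with `p = P(|Z1 - y| ≤ t)` and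
`q = P(|Z1 - y| ≤ t ∧ |Z2 - y| ≤ t)`, one has
`q/p ≤ √((1+ρ)/(1-ρ)) · exp(ρ y²)`.
The probabilities are expressed via the standard (bivariate) Gaussian densities. -/
theorem stmt_2 (ρ t y : ℝ) (hρ : ρ ∈ Set.Ico (0 : ℝ) 1) (ht : 0 < t) :
    (∫ x in Set.Icc (y - t) (y + t), ∫ z in Set.Icc (y - t) (y + t),
        (2 * Real.pi * Real.sqrt (1 - ρ ^ 2))⁻¹ *
          Real.exp (-(x ^ 2 - 2 * ρ * x * z + z ^ 2) / (2 * (1 - ρ ^ 2))))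
      / (∫ x in Set.Icc (y - t) (y + t),
          (Real.sqrt (2 * Real.pi))⁻¹ * Real.exp (-(x ^ 2) / 2))
      ≤ Real.sqrt ((1 + ρ) / (1 - ρ)) * Real.exp (ρ * y ^ 2) := by
  obtain ⟨hρ0, hρ1⟩ := hρ
  have hπ : (0 : ℝ) < Real.pi := Real.pi_pos
  have hd : (0 : ℝ) < 1 - ρ ^ 2 := by nlinarith
  have hsd : (0 : ℝ) < Real.sqrt (1 - ρ ^ 2) := Real.sqrt_pos.mpr hd
  set c : ℝ := (2 * Real.pi * Real.sqrt (1 - ρ ^ 2))⁻¹ with hc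
  have hc0 : 0 < c := by positivity
  -- pointwise bound on the inner integral
  have key : ∀ x : ℝ,
      (∫ z in Set.Icc (y - t) (y + t),
        c * Real.exp (-(x ^ 2 - 2 * ρ * x * z + z ^ 2) / (2 * (1 - ρ ^ 2))))
      ≤ (Real.sqrt (2 * Real.pi))⁻¹ * Real.exp (-(x ^ 2) / 2) := by
    intro x
    set b : ℝ := (2 * (1 - ρ ^ 2))⁻¹ with hb'
    have hb : 0 < b := by positivity
    have hE : (fun z : ℝ => c * Real.exp (-(x ^ 2 - 2 * ρ * x * z + z ^ 2) / (2 * (1 - ρ ^ 2))))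
        = fun z => (c * Real.exp (-(x ^ 2) / 2)) * Real.exp (-b * (z - ρ * x) ^ 2) := by
      funext z
      have hx : -(x ^ 2 - 2 * ρ * x * z + z ^ 2) / (2 * (1 - ρ ^ 2))
          = -(x ^ 2) / 2 + -b * (z - ρ * x) ^ 2 := by
        rw [hb']; field_simp; ring
      rw [hx, Real.exp_add, mul_assoc]
    rw [hE]
    have hint : Integrable (fun z : ℝ =>
        (c * Real.exp (-(x ^ 2) / 2)) * Real.exp (-b * (z - ρ * x) ^ 2)) :=
      ((integrable_exp_neg_mul_sq hb).comp_sub_right (ρ * x)).const_mul _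
    have h1 : (∫ z in Set.Icc (y - t) (y + t),
        (c * Real.exp (-(x ^ 2) / 2)) * Real.exp (-b * (z - ρ * x) ^ 2))
        ≤ ∫ z, (c * Real.exp (-(x ^ 2) / 2)) * Real.exp (-b * (z - ρ * x) ^ 2) := by
      apply setIntegral_le_integral hint
      filter_upwards with z
      positivity
    have h2 : (∫ z, (c * Real.exp (-(x ^ 2) / 2)) * Real.exp (-b * (z - ρ * x) ^ 2))
        = (c * Real.exp (-(x ^ 2) / 2)) * Real.sqrt (Real.pi / b) := by
      rw [integral_const_mul]
      congr 1
      rw [show (∫ z : ℝ, Real.exp (-b * (z - ρ * x) ^ 2))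
          = ∫ z : ℝ, Real.exp (-b * z ^ 2) from
        integral_sub_right_eq_self (fun z : ℝ => Real.exp (-b * z ^ 2)) (ρ * x)]
      exact integral_gaussian b
    have h3 : (c * Real.exp (-(x ^ 2) / 2)) * Real.sqrt (Real.pi / b)
        = (Real.sqrt (2 * Real.pi))⁻¹ * Real.exp (-(x ^ 2) / 2) := by
      have hpb : Real.sqrt (Real.pi / b) = Real.sqrt (2 * Real.pi) * Real.sqrt (1 - ρ ^ 2) := by
        rw [← Real.sqrt_mul (by positivity)]
        congr 1
        rw [hb']
        field_simp
      have h2π : Real.sqrt (2 * Real.pi) * Real.sqrt (2 * Real.pi) = 2 * Real.pi :=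
        Real.mul_self_sqrt (by positivity)
      have hs2π : 0 < Real.sqrt (2 * Real.pi) := Real.sqrt_pos.mpr (by positivity)
      have hinv : (Real.sqrt (2 * Real.pi))⁻¹ = Real.sqrt (2 * Real.pi) / (2 * Real.pi) := by
        rw [eq_div_iff (by positivity), ← h2π]
        field_simp
        rw [Real.sqrt_sq hs2π.le]
      have hcc : c * Real.sqrt (Real.pi / b) = (Real.sqrt (2 * Real.pi))⁻¹ := by
        rw [hpb, hc, hinv, inv_mul_eq_div, div_eq_div_iff (by positivity) (by positivity)]
        ring
      rw [← hcc]; ring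
    linarith [h1, h2, h3]
  -- denominator positivity
  have hInt : IntegrableOn (fun x : ℝ => (Real.sqrt (2 * Real.pi))⁻¹ * Real.exp (-(x ^ 2) / 2))
      (Set.Icc (y - t) (y + t)) := by
    apply Continuous.integrableOn_Icc
    continuity
  have hp : 0 < ∫ x in Set.Icc (y - t) (y + t),
      (Real.sqrt (2 * Real.pi))⁻¹ * Real.exp (-(x ^ 2) / 2) := by
    rw [setIntegral_pos_iff_support_of_nonneg_ae]
    · have hsupp : (Function.support fun x : ℝ =>
          (Real.sqrt (2 * Real.pi))⁻¹ * Real.exp (-(x ^ 2) / 2)) = Set.univ := by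
        ext x
        simp only [Function.mem_support, Set.mem_univ, iff_true]
        positivity
      rw [hsupp, Set.univ_inter, Real.volume_Icc]
      rw [show y + t - (y - t) = 2 * t by ring]
      exact ENNReal.ofReal_pos.mpr (by linarith)
    · filter_upwards with x
      positivity
    · exact hInt
  -- numerator ≤ denominator
  have hq : (∫ x in Set.Icc (y - t) (y + t), ∫ z in Set.Icc (y - t) (y + t),
        c * Real.exp (-(x ^ 2 - 2 * ρ * x * z + z ^ 2) / (2 * (1 - ρ ^ 2))))
      ≤ ∫ x in Set.Icc (y - t) (y + t),
        (Real.sqrt (2 * Real.pi))⁻¹ * Real.exp (-(x ^ 2) / 2) := by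
    apply integral_mono_of_nonneg
    · filter_upwards with x
      apply integral_nonneg
      intro z
      positivity
    · exact hInt
    · filter_upwards with x
      exact key x
  -- RHS ≥ 1
  have hR : 1 ≤ Real.sqrt ((1 + ρ) / (1 - ρ)) * Real.exp (ρ * y ^ 2) := by
    have h1 : (1 : ℝ) ≤ (1 + ρ) / (1 - ρ) := by
      rw [le_div_iff₀ (by linarith)]
      linarith
    have h2 : (1 : ℝ) ≤ Real.sqrt ((1 + ρ) / (1 - ρ)) := by
      have h2 := Real.sqrt_le_sqrt h1
      rwa [Real.sqrt_one] at h2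
    have h3 : (1 : ℝ) ≤ Real.exp (ρ * y ^ 2) := Real.one_le_exp (by positivity)
    nlinarith
  rw [div_le_iff₀ hp]
  nlinarith [hq, hR, hp]
end

section
/- For all γ ∈ [0, 1] and all integers t ≥ 2 with 1 - γ ≤ 1/t², it holds that (1 - γ^t) / ((1 - γ)(1 + γ^t)) ≥ t/2, where for γ = 1 the left side is interpreted via the identity (1-γ^t)/(1-γ) = 1 + γ + ... + γ^{t-1}. -/
/-- Quadratic upper bound: `(1-δ)^n ≤ 1 - nδ + n(n-1)/2 δ²` for `δ ∈ [0,1]`. -/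
lemma stmt_4_aux (δ : ℝ) (hδ0 : 0 ≤ δ) (hδ1 : δ ≤ 1) :
    ∀ n : ℕ, (1 - δ) ^ n ≤ 1 - n * δ + (n : ℝ) * ((n : ℝ) - 1) / 2 * δ ^ 2 := by
  intro n
  induction n with
  | zero => norm_num
  | succ n ih =>
    have hnn : 0 ≤ (n : ℝ) * ((n : ℝ) - 1) := by
      rcases Nat.eq_zero_or_pos n with h | h
      · simp [h]
      · have : (1 : ℝ) ≤ n := by exact_mod_cast h
        nlinarith
    have hstep : (1 - δ) ^ (n + 1) ≤ (1 - (n : ℝ) * δ + (n : ℝ) * ((n : ℝ) - 1) / 2 * δ ^ 2) * (1 - δ) := by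
      rw [pow_succ]
      exact mul_le_mul_of_nonneg_right ih (by linarith)
    have hc : 0 ≤ (n : ℝ) * ((n : ℝ) - 1) * δ ^ 3 := by positivity
    have hmid : (1 - (n : ℝ) * δ + (n : ℝ) * ((n : ℝ) - 1) / 2 * δ ^ 2) * (1 - δ)
        ≤ 1 - ((n : ℝ) + 1) * δ + ((n : ℝ) + 1) * (((n : ℝ) + 1) - 1) / 2 * δ ^ 2 := by
      nlinarith [hc]
    push_cast
    linarith [hstep, hmid]

/-- For all `γ ∈ [0,1]` and integers `t ≥ 2` with `1 - γ ≤ 1/t²`, it holds that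
`(1 - γ^t)/((1-γ)(1+γ^t)) ≥ t/2`, where the left side is interpreted via the
identity `(1-γ^t)/(1-γ) = 1 + γ + ... + γ^{t-1}` (valid also at `γ = 1`). -/
theorem stmt_4 (γ : ℝ) (hγ : γ ∈ Set.Icc (0 : ℝ) 1) (t : ℕ) (ht : 2 ≤ t)
    (h : 1 - γ ≤ 1 / (t : ℝ) ^ 2) :
    (∑ i ∈ Finset.range t, γ ^ i) / (1 + γ ^ t) ≥ (t : ℝ) / 2 := by
  obtain ⟨h0, h1⟩ := hγ
  obtain ⟨δ, hγδ'⟩ : ∃ δ : ℝ, γ = 1 - δ := ⟨1 - γ, by ring⟩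
  subst hγδ'
  rw [show (1 : ℝ) - (1 - δ) = δ by ring] at h
  have hδ0 : 0 ≤ δ := by linarith
  have hδ1 : δ ≤ 1 := by linarith
  have ht2 : (2 : ℝ) ≤ (t : ℝ) := by exact_mod_cast ht
  have htpos : (0 : ℝ) < (t : ℝ) := by linarith
  have hpos : (0 : ℝ) < 1 + (1 - δ) ^ t := by positivity
  -- t² δ ≤ 1
  have h' : (t : ℝ) ^ 2 * δ ≤ 1 := by
    have h2 := mul_le_mul_of_nonneg_left h (by positivity : (0:ℝ) ≤ (t:ℝ)^2)
    calc (t : ℝ) ^ 2 * δ ≤ (t : ℝ) ^ 2 * (1 / (t : ℝ) ^ 2) := h2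
      _ = 1 := by field_simp
  -- lower bound on the sum
  have hBern : ∀ i ∈ Finset.range t, 1 - (i : ℝ) * δ ≤ (1 - δ) ^ i := by
    intro i _
    have := one_add_mul_le_pow (a := -δ) (by linarith) i
    calc 1 - (i : ℝ) * δ = 1 + (i : ℝ) * (-δ) := by ring
      _ ≤ (1 + -δ) ^ i := this
      _ = (1 - δ) ^ i := by ring_nf
  have ht1n : (1 : ℕ) ≤ t := by omega
  have hgauss : ∑ i ∈ Finset.range t, (i : ℝ) = (t : ℝ) * ((t : ℝ) - 1) / 2 := by
    have h2 := Finset.sum_range_id_mul_two t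
    have h3 : ((∑ i ∈ Finset.range t, i : ℕ) : ℝ) * 2 = (t : ℝ) * ((t : ℝ) - 1) := by
      rw [show ((2:ℝ)) = ((2:ℕ):ℝ) by norm_num, ← Nat.cast_mul, h2, Nat.cast_mul,
        Nat.cast_sub ht1n, Nat.cast_one]
    push_cast at h3
    linarith
  have hS : (t : ℝ) - (t : ℝ) * ((t : ℝ) - 1) / 2 * δ ≤ ∑ i ∈ Finset.range t, (1 - δ) ^ i := by
    calc (t : ℝ) - (t : ℝ) * ((t : ℝ) - 1) / 2 * δ
        = ∑ i ∈ Finset.range t, (1 - (i : ℝ) * δ) := by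
          rw [Finset.sum_sub_distrib, Finset.sum_const, Finset.card_range, ← Finset.sum_mul,
            hgauss, nsmul_eq_mul, mul_one]
      _ ≤ _ := Finset.sum_le_sum hBern
  -- upper bound on (1-δ)^t
  have hg : (1 - δ) ^ t ≤ 1 - (t : ℝ) * δ + (t : ℝ) * ((t : ℝ) - 1) / 2 * δ ^ 2 :=
    stmt_4_aux δ hδ0 hδ1 t
  -- key nonlinear estimate: t²(t-1)δ² ≤ (t-1)δ
  have ht1 : (0 : ℝ) ≤ (t : ℝ) - 1 := by linarith
  have key : (t : ℝ) ^ 2 * ((t : ℝ) - 1) * δ ^ 2 ≤ ((t : ℝ) - 1) * δ := by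
    nlinarith [mul_nonneg ht1 hδ0]
  rw [ge_iff_le, div_le_div_iff₀ (by norm_num) hpos]
  have hgt : (t : ℝ) * (1 - δ) ^ t
      ≤ (t : ℝ) * (1 - (t : ℝ) * δ + (t : ℝ) * ((t : ℝ) - 1) / 2 * δ ^ 2) :=
    mul_le_mul_of_nonneg_left hg (by positivity)
  nlinarith [hS, hgt, key, mul_nonneg hδ0 htpos.le, hδ0]
end

section
/- Let t ≥ 2 and k ≥ 1 be integers, and let m be an integer with floor(k/2) + 1 ≤ m ≤ k - 1. Set y = k(1 - (m/k)^t). Then 1 ≤ y ≤ k, and (y/k)·log k - log y ≤ 1 whenever k ≥ 3 (using that log y ≥ 0 and (log y)/y is decreasing for y ≥ 3). Consequently K_m² := ((1+(m/k)^t)³/(1-(m/k)^t)) · k^{-2(m/k)^t/(1+(m/k)^t)} ≤ 8e. -/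
set_option maxHeartbeats 1000000


/-- Let `t ≥ 2`, `k ≥ 1` be integers and `⌊k/2⌋ + 1 ≤ m ≤ k - 1`. Set
`y = k(1 - (m/k)^t)`. Then `1 ≤ y ≤ k`, and whenever `k ≥ 3`,
`(y/k) log k - log y ≤ 1`, and consequently
`K_m² = ((1+(m/k)^t)³/(1-(m/k)^t)) · k^{-2(m/k)^t/(1+(m/k)^t)} ≤ 8e`. -/
theorem stmt_8 (t k m : ℕ) (ht : 2 ≤ t) (hk : 1 ≤ k)
    (hm1 : k / 2 + 1 ≤ m) (hm2 : m ≤ k - 1) :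
    (1 ≤ (k : ℝ) * (1 - ((m : ℝ) / k) ^ t)) ∧
    ((k : ℝ) * (1 - ((m : ℝ) / k) ^ t) ≤ (k : ℝ)) ∧
    (3 ≤ k →
      (((k : ℝ) * (1 - ((m : ℝ) / k) ^ t) / k) * Real.log k -
        Real.log ((k : ℝ) * (1 - ((m : ℝ) / k) ^ t)) ≤ 1) ∧
      ((1 + ((m : ℝ) / k) ^ t) ^ 3 / (1 - ((m : ℝ) / k) ^ t)) *
          (k : ℝ) ^ (-(2 * ((m : ℝ) / k) ^ t / (1 + ((m : ℝ) / k) ^ t)))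
        ≤ 8 * Real.exp 1) := by
  have hm1' : 1 ≤ m := by omega
  have hk2 : 2 ≤ k := by omega
  have hkpos : (0:ℝ) < k := by exact_mod_cast Nat.pos_of_ne_zero (by omega)
  have hkne : (k:ℝ) ≠ 0 := ne_of_gt hkpos
  set γ : ℝ := (m:ℝ)/k with hγdef
  have hγ0 : 0 < γ := by
    apply div_pos _ hkpos
    exact_mod_cast Nat.pos_of_ne_zero (by omega)
  have hmk : (m:ℝ) ≤ (k:ℝ) - 1 := by
    have h := hm2
    have : (m:ℝ) ≤ ((k-1:ℕ):ℝ) := by exact_mod_cast h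
    rwa [Nat.cast_sub hk, Nat.cast_one] at this
  have hγle : γ ≤ 1 - 1/(k:ℝ) := by
    rw [hγdef, div_le_iff₀ hkpos]
    have : (1 - 1/(k:ℝ)) * k = k - 1 := by field_simp
    rw [this]; exact hmk
  have hγlt : γ < 1 := lt_of_le_of_lt hγle (by
    have : 0 < 1/(k:ℝ) := by positivity
    linarith)
  set g : ℝ := γ ^ t with hgdef
  have hg0 : 0 ≤ g := by positivity
  have hg1 : g < 1 := pow_lt_one₀ hγ0.le hγlt (by omega)
  have hgγ : g ≤ γ := by
    calc g ≤ γ ^ 1 := pow_le_pow_of_le_one hγ0.le hγlt.le (by omega)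
      _ = γ := pow_one γ
  have hgk : g ≤ 1 - 1/(k:ℝ) := hgγ.trans hγle
  have h1 : 1 ≤ (k:ℝ) * (1 - g) := by
    have h1k : 1/(k:ℝ) ≤ 1 - g := by linarith
    calc (1:ℝ) = k * (1/k) := by field_simp
      _ ≤ k * (1 - g) := by
          exact mul_le_mul_of_nonneg_left h1k hkpos.le
  refine ⟨h1, ?_, ?_⟩
  · nlinarith
  intro hk3
  have hk3R : (3:ℝ) ≤ k := by exact_mod_cast hk3
  set y : ℝ := (k:ℝ) * (1 - g) with hydef
  have hy1 : (1:ℝ) ≤ y := h1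
  have hyk : y ≤ k := by nlinarith
  have hypos : 0 < y := lt_of_lt_of_le one_pos hy1
  have hk1 : (1:ℝ) < k := by linarith
  have hkm1 : (0:ℝ) < (k:ℝ) - 1 := by linarith
  have hL0 : 0 ≤ Real.log k := Real.log_nonneg hk1.le
  -- concavity of log: log y ≥ ((y-1)/(k-1)) * log k
  have hlogy : ((y - 1)/((k:ℝ) - 1)) * Real.log k ≤ Real.log y := by
    have hconc := strictConcaveOn_log_Ioi.concaveOn
    have ha : (0:ℝ) ≤ ((k:ℝ) - y)/((k:ℝ) - 1) := by
      apply div_nonneg (by linarith) hkm1.le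
    have hb : (0:ℝ) ≤ (y - 1)/((k:ℝ) - 1) := by
      apply div_nonneg (by linarith) hkm1.le
    have hab : ((k:ℝ) - y)/((k:ℝ) - 1) + (y - 1)/((k:ℝ) - 1) = 1 := by
      field_simp
      ring
    have hmem1 : (1:ℝ) ∈ Set.Ioi (0:ℝ) := Set.mem_Ioi.mpr one_pos
    have hmemk : (k:ℝ) ∈ Set.Ioi (0:ℝ) := Set.mem_Ioi.mpr hkpos
    have := hconc.2 hmem1 hmemk ha hb hab
    have hxy : (((k:ℝ) - y)/((k:ℝ) - 1)) • (1:ℝ) + ((y - 1)/((k:ℝ) - 1)) • (k:ℝ) = y := by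
      simp only [smul_eq_mul]
      field_simp
      ring
    rw [hxy] at this
    simpa [Real.log_one] using this
  have hA : (y / k) * Real.log k - Real.log y ≤ 1 := by
    have hdiff : y / k - (y - 1)/((k:ℝ) - 1) = ((k:ℝ) - y)/((k:ℝ) * ((k:ℝ) - 1)) := by
      field_simp
      ring
    have hub : ((k:ℝ) - y)/((k:ℝ) * ((k:ℝ) - 1)) ≤ 1 / k := by
      rw [div_le_div_iff₀ (by positivity) hkpos]
      nlinarith
    have hlogk : Real.log k ≤ (k:ℝ) - 1 := by
      have := Real.log_le_sub_one_of_pos hkpos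
      linarith
    have step1 : (y / k) * Real.log k - Real.log y ≤
        (y / k - (y - 1)/((k:ℝ) - 1)) * Real.log k := by nlinarith [hlogy]
    have step2 : (y / k - (y - 1)/((k:ℝ) - 1)) * Real.log k ≤ (1/k) * Real.log k := by
      rw [hdiff]
      exact mul_le_mul_of_nonneg_right hub hL0
    have step3 : (1/(k:ℝ)) * Real.log k ≤ 1 := by
      rw [div_mul_eq_mul_div, one_mul, div_le_one hkpos]
      linarith
    linarith
  constructor
  · exact hA
  -- part 3b
  have h1g : (0:ℝ) < 1 + g := by linarith
  have h1g' : (0:ℝ) < 1 - g := by linarith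
  set e0 : ℝ := 2 * g / (1 + g) with he0
  have he0id : 1 - e0 = (1 - g)/(1 + g) := by
    rw [he0]; field_simp; ring
  have hykeq : y / k = 1 - g := by
    rw [hydef]; field_simp
  have hfrac : (1 - g)/(1 + g) ≤ 1 - g := by
    exact div_le_self h1g'.le (by linarith)
  have hkey : (1 - e0) * Real.log k - Real.log y ≤ 1 := by
    have : (1 - e0) * Real.log k ≤ (y/k) * Real.log k := by
      rw [he0id, hykeq]
      exact mul_le_mul_of_nonneg_right hfrac hL0
    linarith
  have hlogyk : Real.log y = Real.log k + Real.log (1 - g) := by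
    rw [hydef, Real.log_mul hkne (ne_of_gt h1g')]
  have hrpow : (k:ℝ) ^ (-e0) = Real.exp (Real.log k * (-e0)) := by
    rw [Real.rpow_def_of_pos hkpos]
  have hexp : (k:ℝ) ^ (-e0) ≤ (1 - g) * Real.exp 1 := by
    rw [hrpow]
    have : (1 - g) * Real.exp 1 = Real.exp (Real.log (1 - g) + 1) := by
      rw [Real.exp_add, Real.exp_log h1g']
    rw [this]
    apply Real.exp_le_exp.mpr
    nlinarith [hkey, hlogyk]
  have hcube : (1 + g) ^ 3 ≤ 8 := by
    calc (1 + g) ^ 3 ≤ 2 ^ 3 := by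
          apply pow_le_pow_left₀ (by linarith) (by linarith)
      _ = 8 := by norm_num
  have hfactor : (0:ℝ) ≤ (1 + g)^3 / (1 - g) := by positivity
  calc (1 + g) ^ 3 / (1 - g) * (k:ℝ) ^ (-e0)
      ≤ (1 + g) ^ 3 / (1 - g) * ((1 - g) * Real.exp 1) :=
        mul_le_mul_of_nonneg_left hexp hfactor
    _ = (1 + g) ^ 3 * Real.exp 1 := by field_simp
    _ ≤ 8 * Real.exp 1 :=
        mul_le_mul_of_nonneg_right hcube (Real.exp_pos 1).le
end

section
/- Consider the Metropolis chain on a finite connected graph G = (X, E) with maximum degree Δ targeting π_β(x) ∝ exp(β H(x)) for a Hamiltonian H : X → ℝ with unique maximizer v*. Suppose there exists a spanning tree T of G rooted at v* such that H(parent(x)) - H(x) ≥ δ for all x ≠ v*, where δ > 0. Then for any β ≥ (log Δ + 2)/δ, the stationary probability of v* satisfies π_β(v*) ≥ 3/4. -/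
/-!
Measure every weight relative to `v*`. Since `H` drops by at least `δ` along each tree edge
away from `v*`, a vertex at depth `i` has relative weight at most `e^{-βδ i}`; there are at most
`Δ^i` vertices at depth `i`, and `Δ e^{-βδ} ≤ e^{-2} ≤ 1/4`, so the partition function is at
most `e^{β H(v*)} ∑ 4^{-i} ≤ (4/3) e^{β H(v*)}`.
-/

open Finset Real

namespace ParentMap

variable {X : Type*} [DecidableEq X] {par : X → X} {root : X}

def depth (hreach : ∀ x, ∃ n, par^[n] x = root) (x : X) : ℕ := Nat.find (hreach x)

variable (hreach : ∀ x, ∃ n, par^[n] x = root)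

lemma depth_eq_zero_iff {x : X} : depth hreach x = 0 ↔ x = root := by
  simp [depth]

lemma ne_root_of_depth_eq_succ {x : X} {k : ℕ} (h : depth hreach x = k + 1) : x ≠ root := by
  rintro rfl
  simp [(depth_eq_zero_iff hreach).2 rfl] at h

lemma depth_par_add_one {x : X} (hx : x ≠ root) : depth hreach (par x) + 1 = depth hreach x := by
  obtain ⟨k, hk⟩ := Nat.exists_eq_succ_of_ne_zero ((depth_eq_zero_iff hreach).not.2 hx)
  have hroot_k : par^[k] (par x) = root := by
    rw [← Function.iterate_succ_apply, ← hk]; exact Nat.find_spec (hreach x)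
  have hroot_succ : par^[depth hreach (par x) + 1] x = root := Nat.find_spec (hreach (par x))
  have := Nat.find_min' (hreach (par x)) hroot_k
  have := Nat.find_min' (hreach x) hroot_succ
  simp only [depth] at *
  omega

lemma mul_depth_le_sub {H : X → ℝ} {δ : ℝ} (hinc : ∀ x, x ≠ root → H (par x) - H x ≥ δ)
    (x : X) : δ * depth hreach x ≤ H root - H x := by
  induction h : depth hreach x generalizing x with
  | zero => simp [(depth_eq_zero_iff hreach).1 h]
  | succ k ih =>
    have hx := ne_root_of_depth_eq_succ hreach h
    have := ih (par x) (by have := depth_par_add_one hreach hx; omega)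
    have := hinc x hx
    push_cast
    linarith

lemma exp_mul_le_mul_pow_depth {H : X → ℝ} {δ β : ℝ} (hβ : 0 ≤ β)
    (hinc : ∀ x, x ≠ root → H (par x) - H x ≥ δ) (x : X) :
    exp (β * H x) ≤ exp (β * H root) * exp (-(β * δ)) ^ depth hreach x := by
  rw [← exp_nat_mul, ← exp_add, exp_le_exp]
  nlinarith [mul_depth_le_sub hreach hinc x]

variable [Fintype X] {Δ : ℕ}

lemma card_depth_eq_le_pow (hfib : ∀ b, #{a | a ≠ root ∧ par a = b} ≤ Δ) (i : ℕ) :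
    #{x | depth hreach x = i} ≤ Δ ^ i := by
  induction i with
  | zero => simp [depth_eq_zero_iff, filter_eq']
  | succ k ih =>
    have hmaps : ∀ a ∈ ({x | depth hreach x = k + 1} : Finset X),
        par a ∈ ({x | depth hreach x = k} : Finset X) := by
      intro a ha
      rw [mem_filter] at ha ⊢
      have := depth_par_add_one hreach (ne_root_of_depth_eq_succ hreach ha.2)
      exact ⟨mem_univ _, by omega⟩
    have hfib' : ∀ b ∈ ({x | depth hreach x = k} : Finset X),
        #{a ∈ ({x | depth hreach x = k + 1} : Finset X) | par a = b} ≤ Δ := by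
      refine fun b _ ↦ le_trans (card_le_card fun a ha ↦ ?_) (hfib b)
      simp only [mem_filter, mem_univ, true_and] at ha ⊢
      exact ⟨ne_root_of_depth_eq_succ hreach ha.1, ha.2⟩
    calc #{x | depth hreach x = k + 1} ≤ Δ * #{x | depth hreach x = k} :=
          card_le_mul_card_image_of_maps_to hmaps Δ hfib'
      _ ≤ Δ * Δ ^ k := Nat.mul_le_mul_left _ ih
      _ = Δ ^ (k + 1) := (pow_succ' _ _).symm

lemma sum_pow_depth_le (hfib : ∀ b, #{a | a ≠ root ∧ par a = b} ≤ Δ) {r q : ℝ} (hr : 0 ≤ r)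
    (hq : Δ * r ≤ q) (hq1 : q < 1) : ∑ x, r ^ depth hreach x ≤ (1 - q)⁻¹ := by
  set N := univ.sup (depth hreach) + 1
  have hmaps : ∀ x ∈ (univ : Finset X), depth hreach x ∈ range N :=
    fun x hx ↦ mem_range.2 (Nat.lt_succ_of_le (le_sup hx))
  calc ∑ x, r ^ depth hreach x
      = ∑ i ∈ range N, #{x | depth hreach x = i} * r ^ i := by
        rw [← sum_fiberwise_of_maps_to hmaps]
        refine sum_congr rfl fun i _ ↦ ?_
        rw [sum_congr rfl fun x hx ↦ by rw [(mem_filter.1 hx).2], sum_const, nsmul_eq_mul]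
    _ ≤ ∑ i ∈ range N, q ^ i := by
        refine sum_le_sum fun i _ ↦ ?_
        calc (#{x | depth hreach x = i} : ℝ) * r ^ i ≤ (Δ : ℝ) ^ i * r ^ i := by
              gcongr; exact_mod_cast card_depth_eq_le_pow hreach hfib i
          _ = (Δ * r) ^ i := (mul_pow _ _ _).symm
          _ ≤ q ^ i := by gcongr
    _ ≤ (1 - q)⁻¹ := by
        have hq0 : 0 ≤ q := le_trans (by positivity) hq
        rw [range_eq_Ico]
        exact (geom_sum_Ico_le_of_lt_one hq0 hq1).trans_eq (by simp)

end ParentMap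

lemma SimpleGraph.card_filter_par_eq_le_degree {X : Type*} [Fintype X] [DecidableEq X]
    (G : SimpleGraph X) [DecidableRel G.Adj] {par : X → X} {root : X}
    (hadj : ∀ x, x ≠ root → G.Adj x (par x)) (b : X) : #{a | a ≠ root ∧ par a = b} ≤ G.degree b := by
  rw [← G.card_neighborFinset_eq_degree]
  refine card_le_card fun a ha ↦ ?_
  obtain ⟨ha_ne, rfl⟩ := (mem_filter.1 ha).2
  exact (G.mem_neighborFinset _ _).2 (hadj a ha_ne).symm

lemma Real.natCast_mul_exp_neg_le_quarter {Δ : ℕ} {t : ℝ} (ht : log Δ + 2 ≤ t) :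
    Δ * exp (-t) ≤ 1 / 4 := by
  have h4 : 4 ≤ exp 2 := by
    have : exp 2 = exp 1 * exp 1 := by rw [← exp_add]; norm_num
    nlinarith [exp_one_gt_d9]
  rcases Nat.eq_zero_or_pos Δ with rfl | hΔ
  · norm_num
  calc (Δ : ℝ) * exp (-t) ≤ exp (log Δ) * exp (-(log Δ + 2)) := by
        rw [exp_log (by exact_mod_cast hΔ)]; gcongr
    _ = (exp 2)⁻¹ := by rw [← exp_add, ← exp_neg]; ring_nf
    _ ≤ 1 / 4 := by rw [one_div]; gcongr

theorem stmt_10_general {X : Type*} [Fintype X] [DecidableEq X] (G : SimpleGraph X)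
    [DecidableRel G.Adj]
    (H : X → ℝ) (vstar : X) (par : X → X) (Δ : ℕ) (δ β : ℝ)
    (hΔ : ∀ x, G.degree x ≤ Δ)
    (hadj : ∀ x, x ≠ vstar → G.Adj x (par x))
    (hreach : ∀ x, ∃ n, par^[n] x = vstar)
    (hδ : 0 < δ)
    (hinc : ∀ x, x ≠ vstar → H (par x) - H x ≥ δ)
    (hβ : β ≥ (Real.log Δ + 2) / δ) :
    Real.exp (β * H vstar) / (∑ y : X, Real.exp (β * H y)) ≥ 3 / 4 := by
  have hβδ : log Δ + 2 ≤ β * δ := (div_le_iff₀ hδ).1 hβ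
  have hβ0 : 0 ≤ β := (pos_of_mul_pos_left (by linarith [log_natCast_nonneg Δ]) hδ.le).le
  have hfib (b : X) := (G.card_filter_par_eq_le_degree hadj b).trans (hΔ b)
  have hZ : ∑ y, exp (β * H y) ≤ exp (β * H vstar) * (1 - 1 / 4)⁻¹ :=
    calc ∑ y, exp (β * H y)
        ≤ ∑ y, exp (β * H vstar) * exp (-(β * δ)) ^ ParentMap.depth hreach y :=
          sum_le_sum fun y _ ↦ ParentMap.exp_mul_le_mul_pow_depth hreach hβ0 hinc y
      _ = exp (β * H vstar) * ∑ y, exp (-(β * δ)) ^ ParentMap.depth hreach y :=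
          (mul_sum ..).symm
      _ ≤ _ := by
          gcongr
          exact ParentMap.sum_pow_depth_le hreach hfib (exp_pos _).le
            (natCast_mul_exp_neg_le_quarter hβδ) (by norm_num)
  have hZ_pos : 0 < ∑ y, exp (β * H y) := sum_pos (fun y _ ↦ exp_pos _) ⟨vstar, mem_univ _⟩
  rw [ge_iff_le, le_div_iff₀ hZ_pos]
  norm_num at hZ
  linarith

/-- Metropolis chain on a finite connected graph `G` with maximum degree `Δ`,
targeting `π_β(x) ∝ exp(β H(x))` with unique maximizer `v*`. If there is a
spanning tree rooted at `v*` (encoded by the parent map `par`) along which `H`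
increases by at least `δ > 0` towards the root, then for any
`β ≥ (log Δ + 2)/δ`, the stationary probability of `v*` is at least `3/4`. -/
theorem stmt_10 {X : Type*} [Fintype X] [DecidableEq X] (G : SimpleGraph X)
    [DecidableRel G.Adj] (hconn : G.Connected)
    (H : X → ℝ) (vstar : X) (par : X → X) (Δ : ℕ) (δ β : ℝ)
    (hΔ : ∀ x, G.degree x ≤ Δ)
    (hmax : ∀ x, x ≠ vstar → H x < H vstar)
    (hadj : ∀ x, x ≠ vstar → G.Adj x (par x))
    (hroot : par vstar = vstar)
    (hreach : ∀ x, ∃ n, par^[n] x = vstar)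
    (hδ : 0 < δ)
    (hinc : ∀ x, x ≠ vstar → H (par x) - H x ≥ δ)
    (hβ : β ≥ (Real.log Δ + 2) / δ) :
    Real.exp (β * H vstar) / (∑ y : X, Real.exp (β * H y)) ≥ 3 / 4 :=
  stmt_10_general G H vstar par Δ δ β hΔ hadj hreach hδ hinc hβ
end

section
/- Let X be a finite set, G a graph on X with maximum degree Δ, H : X → ℝ with unique maximizer v*, and T a spanning tree of G rooted at v* with H(parent(x)) - H(x) ≥ δ > 0 for all x ≠ v*. Then for any x ∈ X and any β ≥ (log Δ + 2)/δ, the sum over all descendants y of x in T (including x itself) of exp(β(H(y) - H(x))) is at most Σ_{i=0}^∞ e^{-2i} = 1/(1 - e^{-2}) ≤ 4/3. -/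
open scoped Classical

noncomputable def Ddesc {X : Type*} [Fintype X] (par : X → X) (z : X) : Finset X :=
  Finset.univ.filter (fun y => ∃ n, par^[n] y = z)

noncomputable def Chl {X : Type*} [Fintype X] (par : X → X) (z : X) : Finset X :=
  Finset.univ.filter (fun c => par c = z ∧ c ≠ z)

lemma mem_Ddesc {X : Type*} [Fintype X] {par : X → X} {z y : X} :
    y ∈ Ddesc par z ↔ ∃ n, par^[n] y = z := by
  simp [Ddesc]

lemma mem_Chl {X : Type*} [Fintype X] {par : X → X} {z c : X} :
    c ∈ Chl par z ↔ par c = z ∧ c ≠ z := by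
  simp [Chl]

/-- Finite set `X`, graph `G` of maximum degree `Δ`, Hamiltonian `H` with unique
maximizer `v*`, and a spanning tree rooted at `v*` (parent map `par`) along which
`H` increases by at least `δ > 0`. Then for any `x ∈ X` and `β ≥ (log Δ + 2)/δ`,
the sum over the descendants `y` of `x` in the tree (including `x`) of
`exp(β(H(y) - H(x)))` is at most `4/3`. -/
theorem stmt_11 {X : Type*} [Fintype X] [DecidableEq X] (G : SimpleGraph X)
    [DecidableRel G.Adj]
    (H : X → ℝ) (vstar : X) (par : X → X) (Δ : ℕ) (δ : ℝ)
    (hΔ : ∀ x, G.degree x ≤ Δ)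
    (hmax : ∀ x, x ≠ vstar → H x < H vstar)
    (hadj : ∀ x, x ≠ vstar → G.Adj x (par x))
    (hroot : par vstar = vstar)
    (hreach : ∀ x, ∃ n, par^[n] x = vstar)
    (hδ : 0 < δ)
    (hinc : ∀ x, x ≠ vstar → H (par x) - H x ≥ δ) :
    ∀ x : X, ∀ β : ℝ, β ≥ (Real.log Δ + 2) / δ →
      (∑ y ∈ Finset.univ.filter (fun y => ∃ n, par^[n] y = x),
          Real.exp (β * (H y - H x))) ≤ 4 / 3 := by
  intro x β hβ
  -- basic real facts
  have he2 : Real.exp (-2) < 1 := by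
    rw [← Real.exp_zero]; exact Real.exp_lt_exp.mpr (by norm_num)
  have he2pos : 0 < Real.exp (-2) := Real.exp_pos _
  set C : ℝ := (1 - Real.exp (-2))⁻¹ with hCdef
  have hCpos : 0 < C := by
    rw [hCdef]; exact inv_pos.mpr (by linarith)
  have hCeq : C * (1 - Real.exp (-2)) = 1 := by
    rw [hCdef]; exact inv_mul_cancel₀ (by linarith)
  have hlogΔ : 0 ≤ Real.log Δ := by
    rcases Nat.eq_zero_or_pos Δ with h | h
    · simp [h]
    · exact Real.log_nonneg (by exact_mod_cast h)
  have hβδ : Real.log Δ + 2 ≤ β * δ := by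
    rw [ge_iff_le, div_le_iff₀ hδ] at hβ
    exact hβ
  have hβ0 : 0 ≤ β := by nlinarith
  -- H strictly increases toward the root
  have hlt : ∀ n : ℕ, ∀ y z : X, par^[n] y = z → y ≠ z → H y < H z := by
    intro n
    induction n with
    | zero => intro y z h hne; exact absurd h hne
    | succ n ih =>
      intro y z h hne
      rw [Function.iterate_succ_apply] at h
      by_cases hyv : y = vstar
      · subst hyv
        rw [hroot, Function.iterate_fixed hroot] at h
        exact absurd h hne
      · have h1 : H y + δ ≤ H (par y) := by
          have := hinc y hyv; linarith
        by_cases hpz : par y = z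
        · rw [hpz] at h1; linarith
        · have := ih (par y) z h hpz; linarith
  have hanti : ∀ y z : X, (∃ n, par^[n] y = z) → (∃ m, par^[m] z = y) → y = z := by
    rintro y z ⟨n, hn⟩ ⟨m, hm⟩
    by_contra hne
    have h1 := hlt n y z hn hne
    have h2 := hlt m z y hm (Ne.symm hne)
    linarith
  -- children bound
  have hchl : ∀ z : X, (Chl par z).card ≤ Δ := by
    intro z
    have hsub : Chl par z ⊆ G.neighborFinset z := by
      intro c hc
      rw [mem_Chl] at hc
      obtain ⟨h1, h2⟩ := hc
      have hcv : c ≠ vstar := by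
        intro h; subst h; rw [hroot] at h1; exact h2 h1
      rw [SimpleGraph.mem_neighborFinset]
      have := hadj c hcv
      rw [h1] at this
      exact this.symm
    calc (Chl par z).card ≤ (G.neighborFinset z).card := Finset.card_le_card hsub
      _ = G.degree z := (G.card_neighborFinset_eq_degree z)
      _ ≤ Δ := hΔ z
  -- decomposition of descendant set
  have hdecomp : ∀ z : X, Ddesc par z = insert z ((Chl par z).biUnion (Ddesc par)) := by
    intro z
    ext y
    simp only [Finset.mem_insert, Finset.mem_biUnion, mem_Ddesc, mem_Chl]
    constructor
    · rintro ⟨n, hn⟩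
      by_cases hyz : y = z
      · exact Or.inl hyz
      · right
        have hP : ∃ n, par^[n] y = z := ⟨n, hn⟩
        have hm : par^[Nat.find hP] y = z := Nat.find_spec hP
        have hm0 : Nat.find hP ≠ 0 := by
          intro h; rw [h] at hm; exact hyz hm
        obtain ⟨k, hk⟩ := Nat.exists_eq_succ_of_ne_zero hm0
        refine ⟨par^[k] y, ⟨?_, ?_⟩, ⟨k, rfl⟩⟩
        · have hs : par^[k.succ] y = par (par^[k] y) := Function.iterate_succ_apply' par k y
          rw [← hs, ← hk]; exact hm
        · intro h
          exact Nat.find_min hP (by omega) h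
    · rintro (rfl | ⟨c, ⟨hpc, hcz⟩, n, hn⟩)
      · exact ⟨0, rfl⟩
      · exact ⟨n + 1, by rw [Function.iterate_succ_apply', hn, hpc]⟩
  -- children are descendants
  have hcdesc : ∀ z c : X, c ∈ Chl par z → c ∈ Ddesc par z := by
    intro z c hc
    rw [mem_Chl] at hc
    exact mem_Ddesc.mpr ⟨1, by simp [hc.1]⟩
  -- the root of a subtree is not in any child subtree
  have hznot : ∀ z : X, z ∉ (Chl par z).biUnion (Ddesc par) := by
    intro z hz
    rw [Finset.mem_biUnion] at hz
    obtain ⟨c, hc, hzc⟩ := hz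
    rw [mem_Ddesc] at hzc
    have hc' := hcdesc z c hc
    rw [mem_Ddesc] at hc'
    have := hanti c z hc' hzc
    rw [mem_Chl] at hc
    exact hc.2 this
  -- disjointness of child subtrees
  have hkeydisj : ∀ z c c' : X, c ∈ Chl par z → c' ∈ Chl par z →
      (∀ y : X, ∀ n m : ℕ, par^[n] y = c → par^[m] y = c' → n ≤ m → c = c') := by
    intro z c c' hc hc' y n m hn hm hnm
    rw [mem_Chl] at hc hc'
    obtain ⟨k, hk⟩ : ∃ k, m = k + n := ⟨m - n, by omega⟩
    have hkc : par^[k] c = c' := by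
      rw [← hn, ← Function.iterate_add_apply, ← hk, hm]
    rcases Nat.eq_zero_or_pos k with hk0 | hk0
    · rw [hk0] at hkc; exact hkc
    · obtain ⟨j, hj⟩ := Nat.exists_eq_succ_of_ne_zero (Nat.pos_iff_ne_zero.mp hk0)
      rw [hj, Function.iterate_succ_apply, hc.1] at hkc
      rcases Nat.eq_zero_or_pos j with hj0 | hj0
      · rw [hj0] at hkc
        exact absurd hkc.symm hc'.2
      · exfalso
        have hz1 : z ∈ Ddesc par c' := mem_Ddesc.mpr ⟨j, hkc⟩
        have hz2 : c' ∈ Ddesc par z := hcdesc z c' (mem_Chl.mpr hc')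
        rw [mem_Ddesc] at hz1 hz2
        exact hc'.2 (hanti z c' hz1 hz2).symm
  have hdisj : ∀ z : X, ∀ c ∈ Chl par z, ∀ c' ∈ Chl par z, c ≠ c' →
      Disjoint (Ddesc par c) (Ddesc par c') := by
    intro z c hc c' hc' hne
    rw [Finset.disjoint_left]
    intro y hy hy'
    rw [mem_Ddesc] at hy hy'
    obtain ⟨n, hn⟩ := hy
    obtain ⟨m, hm⟩ := hy'
    rcases le_total n m with h | h
    · exact hne (hkeydisj z c c' hc hc' y n m hn hm h)
    · exact hne (hkeydisj z c' c hc' hc y m n hm hn h).symm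
  -- subtree of a child is strictly inside
  have hsubtree : ∀ z : X, ∀ c ∈ Chl par z, Ddesc par c ⊆ (Ddesc par z).erase z := by
    intro z c hc y hy
    rw [Finset.mem_erase]
    constructor
    · intro hyz
      subst hyz
      rw [mem_Ddesc] at hy
      have hc' := hcdesc y c hc
      rw [mem_Ddesc] at hc'
      rw [mem_Chl] at hc
      exact hc.2 (hanti c y hc' hy)
    · rw [hdecomp z, Finset.mem_insert]
      right
      exact Finset.mem_biUnion.mpr ⟨c, hc, hy⟩
  -- per-child exponential bound
  have hΔexp : (Δ : ℝ) * Real.exp (-(β * δ)) ≤ Real.exp (-2) := by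
    rcases Nat.eq_zero_or_pos Δ with h | h
    · simp [h]; positivity
    · have hΔpos : (0 : ℝ) < Δ := by exact_mod_cast h
      have h1 : Real.exp (-(β * δ)) ≤ Real.exp (-(Real.log Δ + 2)) :=
        Real.exp_le_exp.mpr (by linarith)
      have h2 : Real.exp (-(Real.log Δ + 2)) = (Δ : ℝ)⁻¹ * Real.exp (-2) := by
        rw [neg_add, Real.exp_add, Real.exp_neg, Real.exp_log hΔpos]
      calc (Δ : ℝ) * Real.exp (-(β * δ)) ≤ (Δ : ℝ) * ((Δ : ℝ)⁻¹ * Real.exp (-2)) := by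
            rw [← h2]; exact mul_le_mul_of_nonneg_left h1 (le_of_lt hΔpos)
        _ = Real.exp (-2) := by field_simp
  -- main induction
  have key : ∀ N : ℕ, ∀ z : X, (Ddesc par z).card ≤ N →
      (∑ y ∈ Ddesc par z, Real.exp (β * (H y - H z))) ≤ C := by
    intro N
    induction N with
    | zero =>
      intro z hcard
      exfalso
      have : z ∈ Ddesc par z := mem_Ddesc.mpr ⟨0, rfl⟩
      have := Finset.card_pos.mpr ⟨z, this⟩
      omega
    | succ N ih =>
      intro z hcard
      have hzmem : z ∈ Ddesc par z := mem_Ddesc.mpr ⟨0, rfl⟩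
      have hterm : ∀ c ∈ Chl par z,
          (∑ y ∈ Ddesc par c, Real.exp (β * (H y - H z))) ≤ Real.exp (-(β * δ)) * C := by
        intro c hc
        have hccard : (Ddesc par c).card ≤ N := by
          have h1 := Finset.card_le_card (hsubtree z c hc)
          have h2 := Finset.card_erase_of_mem hzmem
          omega
        have hC := ih c hccard
        have hsplit : (∑ y ∈ Ddesc par c, Real.exp (β * (H y - H z)))
            = Real.exp (β * (H c - H z)) * ∑ y ∈ Ddesc par c, Real.exp (β * (H y - H c)) := by
          rw [Finset.mul_sum]
          apply Finset.sum_congr rfl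
          intro y _
          rw [← Real.exp_add]
          ring_nf
        rw [mem_Chl] at hc
        have hcv : c ≠ vstar := by
          intro h; rw [h, hroot] at hc; exact hc.2 hc.1
        have hHc : H c - H z ≤ -δ := by
          have := hinc c hcv
          rw [hc.1] at this
          linarith
        have hce : Real.exp (β * (H c - H z)) ≤ Real.exp (-(β * δ)) := by
          apply Real.exp_le_exp.mpr
          nlinarith
        rw [hsplit]
        have hsum0 : 0 ≤ ∑ y ∈ Ddesc par c, Real.exp (β * (H y - H c)) :=
          Finset.sum_nonneg fun y _ => (Real.exp_pos _).le
        exact mul_le_mul hce hC hsum0 (Real.exp_pos _).le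
      rw [hdecomp z, Finset.sum_insert (hznot z), Finset.sum_biUnion (hdisj z)]
      have h1 : (∑ c ∈ Chl par z, ∑ y ∈ Ddesc par c, Real.exp (β * (H y - H z)))
          ≤ (Chl par z).card * (Real.exp (-(β * δ)) * C) := by
        have := Finset.sum_le_card_nsmul (Chl par z)
          (fun c => ∑ y ∈ Ddesc par c, Real.exp (β * (H y - H z)))
          (Real.exp (-(β * δ)) * C) hterm
        simpa [nsmul_eq_mul] using this
      have h2 : ((Chl par z).card : ℝ) * (Real.exp (-(β * δ)) * C)
          ≤ (Δ : ℝ) * (Real.exp (-(β * δ)) * C) := by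
        apply mul_le_mul_of_nonneg_right
        · exact_mod_cast hchl z
        · positivity
      have h3 : (Δ : ℝ) * (Real.exp (-(β * δ)) * C) ≤ Real.exp (-2) * C := by
        rw [← mul_assoc]
        exact mul_le_mul_of_nonneg_right hΔexp hCpos.le
      have h4 : Real.exp (β * (H z - H z)) = 1 := by simp
      rw [h4]
      have : 1 + Real.exp (-2) * C = C := by
        have := hCeq; ring_nf; ring_nf at this; nlinarith [hCeq]
      linarith
  have hfin : (∑ y ∈ Ddesc par x, Real.exp (β * (H y - H x))) ≤ C :=
    key (Fintype.card X) x (Finset.card_le_univ _)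
  have hC43 : C ≤ 4 / 3 := by
    have he : Real.exp (-2) ≤ 1 / 4 := by
      have h2 : Real.exp (-2) * Real.exp 2 = 1 := by
        rw [← Real.exp_add]; norm_num
      have h3 : (4 : ℝ) ≤ Real.exp 2 := by
        have := Real.exp_one_gt_d9
        have h4 : Real.exp 2 = Real.exp 1 * Real.exp 1 := by
          rw [← Real.exp_add]; norm_num
        nlinarith
      nlinarith [Real.exp_pos (2 : ℝ)]
    rw [hCdef]
    rw [inv_le_comm₀ (by linarith) (by norm_num)]
    linarith
  exact le_trans hfin hC43
end

section
/- Let 1 ≤ k = o(p) and let ℓ be an integer with k²/p ≪ ℓ ≪ k. Then for all sufficiently large p, log(binom(k,ℓ) · binom(p-k, k-ℓ)) - log binom(p,k) ≤ -ℓ/2. -/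
open Filter

/-- For sequences `k = k_p` and `ℓ = ℓ_p` of positive integers with `k = o(p)`,
`ℓ = ω(k²/p)` and `ℓ = o(k)`, for all sufficiently large `p`:
`log(binom(k,ℓ)·binom(p-k,k-ℓ)) - log binom(p,k) ≤ -ℓ/2`. -/
theorem stmt_12 (k ℓ : ℕ → ℕ) (hk1 : ∀ p, 1 ≤ k p) (hℓ1 : ∀ p, 1 ≤ ℓ p)
    (hko : Tendsto (fun p => (k p : ℝ) / p) atTop (nhds 0))
    (hℓlo : Tendsto (fun p => (ℓ p : ℝ) * p / (k p : ℝ) ^ 2) atTop atTop)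
    (hℓhi : Tendsto (fun p => (ℓ p : ℝ) / (k p : ℝ)) atTop (nhds 0)) :
    ∀ᶠ p in atTop,
      Real.log (((k p).choose (ℓ p) : ℝ) * ((p - k p).choose (k p - ℓ p) : ℝ)) -
          Real.log (p.choose (k p) : ℝ)
        ≤ -(ℓ p : ℝ) / 2 := by
  have e1 : ∀ᶠ p : ℕ in atTop, (k p : ℝ) / p < 1/4 :=
    hko.eventually (gt_mem_nhds (by norm_num))
  have e2 : ∀ᶠ p : ℕ in atTop, (ℓ p : ℝ) / (k p : ℝ) < 1 :=
    hℓhi.eventually (gt_mem_nhds (by norm_num))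
  have e3 : ∀ᶠ p : ℕ in atTop, 2 * Real.exp (3/2) ≤ (ℓ p : ℝ) * p / (k p : ℝ) ^ 2 :=
    hℓlo.eventually_ge_atTop _
  filter_upwards [e1, e2, e3, eventually_gt_atTop 0] with p h1 h2 h3 hp0
  have hK0 : 0 < k p := hk1 p
  have hL0 : 0 < ℓ p := hℓ1 p
  have hKr : (0:ℝ) < k p := by exact_mod_cast hK0
  have hPr : (0:ℝ) < p := by exact_mod_cast hp0
  have hLK : ℓ p < k p := by
    have := (div_lt_one hKr).mp h2
    exact_mod_cast this
  have h4K : 4 * (k p : ℝ) < p := by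
    have := (div_lt_iff₀ hPr).mp h1; linarith
  have hKp : k p ≤ p := by
    have : (k p : ℝ) ≤ p := by linarith
    exact_mod_cast this
  have h2K : 2 * k p ≤ p := by
    have : 2 * (k p : ℝ) ≤ p := by linarith
    exact_mod_cast this
  have hLKle : ℓ p ≤ k p := hLK.le
  -- nat facts
  have hBD : (p - k p).choose (k p - ℓ p) ≤ (p - ℓ p).choose (k p - ℓ p) :=
    Nat.choose_le_choose _ (Nat.sub_le_sub_left hLKle p)
  have hid : p.choose (k p) * (k p).choose (ℓ p) =
      p.choose (ℓ p) * (p - ℓ p).choose (k p - ℓ p) := Nat.choose_mul hLKle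
  have hA0 : 0 < (k p).choose (ℓ p) := Nat.choose_pos hLKle
  have hB0 : 0 < (p - k p).choose (k p - ℓ p) := Nat.choose_pos (by omega)
  have hC0 : 0 < p.choose (k p) := Nat.choose_pos hKp
  have hCl0 : 0 < p.choose (ℓ p) := Nat.choose_pos (by omega)
  -- real abbreviations
  set A : ℝ := ((k p).choose (ℓ p) : ℝ) with hAdef
  set B : ℝ := ((p - k p).choose (k p - ℓ p) : ℝ) with hBdef
  set C : ℝ := (p.choose (k p) : ℝ) with hCdef
  set Cl : ℝ := (p.choose (ℓ p) : ℝ) with hCldef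
  set D : ℝ := ((p - ℓ p).choose (k p - ℓ p) : ℝ) with hDdef
  have hAr : (0:ℝ) < A := by rw [hAdef]; exact_mod_cast hA0
  have hBr : (0:ℝ) < B := by rw [hBdef]; exact_mod_cast hB0
  have hCr : (0:ℝ) < C := by rw [hCdef]; exact_mod_cast hC0
  have hClr : (0:ℝ) < Cl := by rw [hCldef]; exact_mod_cast hCl0
  have hFr : (0:ℝ) < ((ℓ p).factorial : ℝ) := by exact_mod_cast (ℓ p).factorial_pos
  have hLr : (1:ℝ) ≤ (ℓ p : ℝ) := by exact_mod_cast hL0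
  have hcast : ((p + 1 - ℓ p : ℕ) : ℝ) = (p:ℝ) + 1 - ℓ p := by
    have h : ℓ p ≤ p + 1 := by omega
    push_cast [h]
    ring
  -- base inequality
  have hbase : (k p : ℝ)^2 * Real.exp (3/2) ≤ ((p:ℝ) + 1 - ℓ p) * ℓ p := by
    have hK2 : (0:ℝ) < (k p : ℝ)^2 := by positivity
    have h3' : 2 * Real.exp (3/2) * (k p : ℝ)^2 ≤ (ℓ p : ℝ) * p :=
      (le_div_iff₀ hK2).mp h3
    have hLle : (ℓ p : ℝ) ≤ k p := by exact_mod_cast hLKle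
    have hstep : ((p:ℝ)/2) * ℓ p ≤ ((p:ℝ) + 1 - ℓ p) * ℓ p := by
      apply mul_le_mul_of_nonneg_right _ (by linarith)
      linarith
    calc (k p : ℝ)^2 * Real.exp (3/2) ≤ (ℓ p : ℝ) * p / 2 := by linarith
      _ = ((p:ℝ)/2) * ℓ p := by ring
      _ ≤ _ := hstep
  -- choose bounds
  have hA_up : A * ((ℓ p).factorial : ℝ) ≤ (k p : ℝ) ^ ℓ p := by
    have := Nat.choose_le_pow_div (α := ℝ) (ℓ p) (k p)
    rw [le_div_iff₀ hFr] at this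
    exact this
  have hCl_lo : ((p:ℝ) + 1 - ℓ p) ^ ℓ p ≤ Cl * ((ℓ p).factorial : ℝ) := by
    have := Nat.pow_le_choose (α := ℝ) (ℓ p) p
    rw [div_le_iff₀ hFr] at this
    calc ((p:ℝ) + 1 - ℓ p) ^ ℓ p = ((p + 1 - ℓ p : ℕ) : ℝ) ^ ℓ p := by rw [hcast]
      _ ≤ Cl * ((ℓ p).factorial : ℝ) := this
  have hfact : ((ℓ p : ℝ)) ^ ℓ p ≤ Real.exp 1 ^ ℓ p * ((ℓ p).factorial : ℝ) := by
    have h := Real.pow_div_factorial_le_exp (x := (ℓ p : ℝ)) (by positivity) (ℓ p)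
    rw [div_le_iff₀ hFr] at h
    calc ((ℓ p : ℝ)) ^ ℓ p ≤ Real.exp (ℓ p) * ((ℓ p).factorial : ℝ) := h
      _ = Real.exp 1 ^ ℓ p * ((ℓ p).factorial : ℝ) := by rw [← Real.exp_nat_mul]; norm_num
  -- power inequality
  have hpow : ((k p : ℝ)^2) ^ ℓ p * Real.exp (3/2) ^ ℓ p ≤
      (((p:ℝ) + 1 - ℓ p) * ℓ p) ^ ℓ p := by
    rw [← mul_pow]
    exact pow_le_pow_left₀ (by positivity) hbase _
  -- key: A^2 ≤ Cl * exp(-ℓ/2)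
  have hAsq : A ^ 2 ≤ Cl * Real.exp (-(ℓ p : ℝ)/2) := by
    have hE : Real.exp (-(ℓ p : ℝ)/2) * Real.exp (3/2) ^ ℓ p = Real.exp 1 ^ ℓ p := by
      rw [← Real.exp_nat_mul, ← Real.exp_nat_mul, ← Real.exp_add]
      congr 1
      ring
    have key : (A * ((ℓ p).factorial : ℝ)) ^ 2 * Real.exp (3/2) ^ ℓ p ≤
        (Cl * Real.exp (-(ℓ p : ℝ)/2)) * ((ℓ p).factorial : ℝ) ^ 2 * Real.exp (3/2) ^ ℓ p := by
      calc (A * ((ℓ p).factorial : ℝ)) ^ 2 * Real.exp (3/2) ^ ℓ p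
          ≤ ((k p : ℝ) ^ ℓ p) ^ 2 * Real.exp (3/2) ^ ℓ p := by
            apply mul_le_mul_of_nonneg_right _ (by positivity)
            exact pow_le_pow_left₀ (by positivity) hA_up 2
        _ = ((k p : ℝ)^2) ^ ℓ p * Real.exp (3/2) ^ ℓ p := by rw [← pow_mul, ← pow_mul, Nat.mul_comm]
        _ ≤ (((p:ℝ) + 1 - ℓ p) * ℓ p) ^ ℓ p := hpow
        _ = ((p:ℝ) + 1 - ℓ p) ^ ℓ p * ((ℓ p : ℝ)) ^ ℓ p := by rw [mul_pow]
        _ ≤ (Cl * ((ℓ p).factorial : ℝ)) * (Real.exp 1 ^ ℓ p * ((ℓ p).factorial : ℝ)) := by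
            apply mul_le_mul hCl_lo hfact (by positivity) (by positivity)
        _ = (Cl * Real.exp (-(ℓ p : ℝ)/2)) * ((ℓ p).factorial : ℝ) ^ 2 * Real.exp (3/2) ^ ℓ p := by
            rw [← hE]
            ring
    have h1' : (A * ((ℓ p).factorial : ℝ)) ^ 2 ≤ (Cl * Real.exp (-(ℓ p : ℝ)/2)) * ((ℓ p).factorial : ℝ) ^ 2 :=
      le_of_mul_le_mul_right key (by positivity)
    have h2' : A ^ 2 * ((ℓ p).factorial : ℝ) ^ 2 ≤ (Cl * Real.exp (-(ℓ p : ℝ)/2)) * ((ℓ p).factorial : ℝ) ^ 2 := by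
      calc A ^ 2 * ((ℓ p).factorial : ℝ) ^ 2 = (A * ((ℓ p).factorial : ℝ)) ^ 2 := by ring
        _ ≤ _ := h1'
    exact le_of_mul_le_mul_right h2' (by positivity)
  -- assemble
  have hidr : C * A = Cl * D := by rw [hCdef, hAdef, hCldef, hDdef]; exact_mod_cast hid
  have hADC : A * D ≤ C * Real.exp (-(ℓ p : ℝ)/2) := by
    rw [← mul_le_mul_iff_of_pos_right hClr]
    have heq : A * D * Cl = A * (C * A) := by rw [hidr]; ring
    calc A * D * Cl = C * A ^ 2 := by rw [heq]; ring
      _ ≤ C * (Cl * Real.exp (-(ℓ p : ℝ)/2)) := by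
          exact mul_le_mul_of_nonneg_left hAsq hCr.le
      _ = C * Real.exp (-(ℓ p : ℝ)/2) * Cl := by ring
  have hBDr : B ≤ D := by rw [hBdef, hDdef]; exact_mod_cast hBD
  have hfin : A * B ≤ C * Real.exp (-(ℓ p : ℝ)/2) :=
    le_trans (mul_le_mul_of_nonneg_left hBDr hAr.le) hADC
  have hlog : Real.log (A * B) ≤ Real.log C + (-(ℓ p : ℝ)/2) := by
    calc Real.log (A * B) ≤ Real.log (C * Real.exp (-(ℓ p : ℝ)/2)) :=
          Real.log_le_log (by positivity) hfin
      _ = Real.log C + (-(ℓ p : ℝ)/2) := by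
          rw [Real.log_mul (ne_of_gt hCr) (Real.exp_ne_zero _), Real.log_exp]
  linarith
end

section
/- Fix integers p ≥ k ≥ 1 and let q = floor(k²/p). For any integer ℓ with q ≤ ℓ ≤ k and p ≥ 4k, and any integer m with q ≤ m ≤ ℓ - 1, the ratio (binom(k,m+1)·binom(p-k,k-m-1)) / (binom(k,m)·binom(p-k,k-m)) is at most 2(q+1)/(m+1). -/
/-!
Both binomial quotients telescope by `C(n, j + 1) (j + 1) = C(n, j) (n - j)`, so the ratio equals
`(k - m)² / ((m + 1)(p - 2k + m + 1))`. For `p ≥ 4k` the second factor of the denominator is at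
least `p / 2`, and `k² < (⌊k²/p⌋ + 1) p` bounds the ratio by `2(⌊k²/p⌋ + 1)/(m + 1)`.
-/

theorem Nat.choose_succ_mul_choose_pred_eq (n k m : ℕ) (hm : m < k) :
    k.choose (m + 1) * n.choose (k - m - 1) * ((m + 1) * (n - (k - m - 1))) =
      k.choose m * n.choose (k - m) * (k - m) ^ 2 := by
  have hk : k.choose (m + 1) * (m + 1) = k.choose m * (k - m) := Nat.choose_succ_right_eq k m
  have hn : n.choose (k - m) * (k - m) = n.choose (k - m - 1) * (n - (k - m - 1)) := by
    have := Nat.choose_succ_right_eq n (k - m - 1)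
    rwa [show k - m - 1 + 1 = k - m by omega] at this
  calc k.choose (m + 1) * n.choose (k - m - 1) * ((m + 1) * (n - (k - m - 1)))
      = (k.choose (m + 1) * (m + 1)) * (n.choose (k - m - 1) * (n - (k - m - 1))) := by ring
    _ = k.choose m * n.choose (k - m) * (k - m) ^ 2 := by rw [hk, ← hn]; ring

theorem Nat.choose_ratio_mul_le (p k m : ℕ) (h4 : 4 * k ≤ p) :
    k.choose (m + 1) * (p - k).choose (k - m - 1) * (m + 1) ≤
      2 * (k ^ 2 / p + 1) * (k.choose m * (p - k).choose (k - m)) := by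
  rcases lt_or_ge m k with hm | hm
  swap
  · simp [Nat.choose_eq_zero_of_lt (Nat.lt_succ_of_le hm)]
  set D := p - k - (k - m - 1)
  have hD : p ≤ 2 * D := by omega
  have hsq : (k - m) ^ 2 ≤ 2 * (k ^ 2 / p + 1) * D := by
    have hq : k ^ 2 < (k ^ 2 / p + 1) * p := by
      rw [Nat.mul_comm]; exact Nat.lt_mul_div_succ _ (by omega)
    calc (k - m) ^ 2 ≤ k ^ 2 := Nat.pow_le_pow_left (Nat.sub_le k m) 2
      _ ≤ (k ^ 2 / p + 1) * p := hq.le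
      _ ≤ (k ^ 2 / p + 1) * (2 * D) := Nat.mul_le_mul_left _ hD
      _ = 2 * (k ^ 2 / p + 1) * D := by ring
  refine Nat.le_of_mul_le_mul_right ?_ (show 0 < D by omega)
  calc k.choose (m + 1) * (p - k).choose (k - m - 1) * (m + 1) * D
      = k.choose m * (p - k).choose (k - m) * (k - m) ^ 2 := by
        rw [← Nat.choose_succ_mul_choose_pred_eq _ _ _ hm]; ring
    _ ≤ k.choose m * (p - k).choose (k - m) * (2 * (k ^ 2 / p + 1) * D) :=
        Nat.mul_le_mul_left _ hsq
    _ = 2 * (k ^ 2 / p + 1) * (k.choose m * (p - k).choose (k - m)) * D := by ring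

theorem stmt_13_general (p k m : ℕ) (h4 : 4 * k ≤ p) :
    ((k.choose (m + 1) : ℝ) * ((p - k).choose (k - m - 1) : ℝ)) /
        ((k.choose m : ℝ) * ((p - k).choose (k - m) : ℝ))
      ≤ 2 * ((k ^ 2 / p : ℕ) + 1 : ℝ) / ((m : ℝ) + 1) := by
  have h := Nat.choose_ratio_mul_le p k m h4
  rcases Nat.eq_zero_or_pos (k.choose m * (p - k).choose (k - m)) with h0 | hpos
  · have h0' : (k.choose m : ℝ) * ((p - k).choose (k - m) : ℝ) = 0 := by exact_mod_cast h0
    rw [h0', div_zero]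
    positivity
  rw [div_le_div_iff₀ (by exact_mod_cast hpos) (by positivity)]
  exact_mod_cast h

/-- Fix integers `p ≥ k ≥ 1` and let `q = ⌊k²/p⌋`. For any integer `ℓ` with
`q ≤ ℓ ≤ k` and `p ≥ 4k`, and any integer `m` with `q ≤ m ≤ ℓ - 1`, the ratio
`(binom(k,m+1)·binom(p-k,k-m-1)) / (binom(k,m)·binom(p-k,k-m))` is at most
`2(q+1)/(m+1)`. -/
theorem stmt_13 (p k ℓ m : ℕ) (hk : 1 ≤ k) (hkp : k ≤ p) (h4 : 4 * k ≤ p)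
    (hqℓ : k ^ 2 / p ≤ ℓ) (hℓk : ℓ ≤ k) (hqm : k ^ 2 / p ≤ m) (hm : m + 1 ≤ ℓ) :
    ((k.choose (m + 1) : ℝ) * ((p - k).choose (k - m - 1) : ℝ)) /
        ((k.choose m : ℝ) * ((p - k).choose (k - m) : ℝ))
      ≤ 2 * ((k ^ 2 / p : ℕ) + 1 : ℝ) / ((m : ℝ) + 1) :=
  stmt_13_general p k m h4
end

section
/- Let p ≥ 3k and 3k/4 ≤ m ≤ k-1 with k, m, p positive integers. Then binom(k,m)·binom(p-k,k-m)·binom(p,k)^{-(k²-m²)/k²} ≤ (k^{11/4}/p^{3/4})^{k-m}. -/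
lemma descFact_cast_real (n : ℕ) : ∀ k : ℕ, k ≤ n →
    (n.descFactorial k : ℝ) = ∏ i ∈ Finset.range k, ((n : ℝ) - i) := by
  intro k
  induction k with
  | zero => simp
  | succ j ih =>
    intro h
    rw [Nat.descFactorial_succ, Finset.prod_range_succ, Nat.cast_mul,
      ih (le_of_lt (Nat.lt_of_succ_le h)), Nat.cast_sub (le_of_lt (Nat.lt_of_succ_le h))]
    ring

lemma pow_div_le_choose (n k : ℕ) (hk : 1 ≤ k) (hkn : k ≤ n) :
    ((n : ℝ) / k) ^ k ≤ n.choose k := by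
  have hk0 : (0 : ℝ) < k := by exact_mod_cast hk
  have hfac : ((k.factorial : ℝ)) = ∏ i ∈ Finset.range k, ((k : ℝ) - i) := by
    rw [← Nat.descFactorial_self]; exact descFact_cast_real k k le_rfl
  have hpow : ((n : ℝ) / k) ^ k = ∏ _i ∈ Finset.range k, ((n : ℝ) / k) := by
    rw [Finset.prod_const, Finset.card_range]
  have hprod : ((n : ℝ) / k) ^ k ≤ (n.descFactorial k : ℝ) / k.factorial := by
    rw [descFact_cast_real n k hkn, hfac, ← Finset.prod_div_distrib, hpow]
    apply Finset.prod_le_prod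
    · intro i _
      positivity
    · intro i hi
      have hik : i < k := Finset.mem_range.mp hi
      have hi1 : (i : ℝ) < k := by exact_mod_cast hik
      have hkn' : (k : ℝ) ≤ n := by exact_mod_cast hkn
      rw [div_le_div_iff₀ hk0 (by linarith)]
      nlinarith
  have hchoose : (n.descFactorial k : ℝ) / k.factorial = n.choose k := by
    rw [Nat.descFactorial_eq_factorial_mul_choose, Nat.cast_mul]
    field_simp
  linarith [hprod, hchoose.ge]

/-- Let `p ≥ 3k` and `3k/4 ≤ m ≤ k-1` with `k, m, p` positive integers. Then
`binom(k,m)·binom(p-k,k-m)·binom(p,k)^{-(k²-m²)/k²} ≤ (k^{11/4}/p^{3/4})^{k-m}`. -/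
theorem stmt_18 (p k m : ℕ) (hk : 1 ≤ k) (hmpos : 1 ≤ m) (hppos : 1 ≤ p)
    (hp : 3 * k ≤ p) (hm1 : 3 * k ≤ 4 * m) (hm2 : m + 1 ≤ k) :
    ((k.choose m : ℝ) * ((p - k).choose (k - m) : ℝ)) *
        ((p.choose k : ℝ)) ^ (-((((k : ℝ) ^ 2 - (m : ℝ) ^ 2)) / (k : ℝ) ^ 2))
      ≤ ((k : ℝ) ^ ((11 : ℝ) / 4) / (p : ℝ) ^ ((3 : ℝ) / 4)) ^ (k - m) := by
  have hmk : m ≤ k := le_of_lt hm2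
  have hkp : k ≤ p := le_trans (by omega) hp
  have hK1 : (1 : ℝ) ≤ (k : ℝ) := by exact_mod_cast hk
  have hK0 : (0 : ℝ) < (k : ℝ) := lt_of_lt_of_le one_pos hK1
  have hP0 : (0 : ℝ) < (p : ℝ) := by exact_mod_cast hppos
  have hMK : (m : ℝ) ≤ (k : ℝ) := by exact_mod_cast hmk
  have hM0 : (0 : ℝ) ≤ (m : ℝ) := by positivity
  have h3KP : 3 * (k : ℝ) ≤ (p : ℝ) := by exact_mod_cast hp
  have h3K4M : 3 * (k : ℝ) ≤ 4 * (m : ℝ) := by exact_mod_cast hm1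
  set D : ℕ := k - m with hD
  have hDcast : (D : ℝ) = (k : ℝ) - (m : ℝ) := by
    rw [hD]; push_cast [Nat.cast_sub hmk]; ring
  set Q : ℝ := (p : ℝ) / (k : ℝ) with hQ
  have hQ1 : (1 : ℝ) ≤ Q := by
    rw [hQ, le_div_iff₀ hK0]; linarith
  have hQ0 : (0 : ℝ) < Q := lt_of_lt_of_le one_pos hQ1
  set e : ℝ := ((k : ℝ) ^ 2 - (m : ℝ) ^ 2) / (k : ℝ) ^ 2 with he
  have he0 : 0 ≤ e := by
    apply div_nonneg _ (by positivity)
    nlinarith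
  -- Bound 1
  have h1 : (k.choose m : ℝ) ≤ (k : ℝ) ^ D := by
    have := Nat.choose_le_pow k D
    rw [hD, Nat.choose_symm hmk] at this
    rw [hD]
    exact_mod_cast this
  -- Bound 2
  have h2 : (((p - k).choose D : ℝ)) ≤ (p : ℝ) ^ D := by
    have h2a : (p - k).choose D ≤ (p - k) ^ D := Nat.choose_le_pow _ _
    have h2b : (p - k) ^ D ≤ p ^ D := Nat.pow_le_pow_left (Nat.sub_le _ _) _
    exact_mod_cast le_trans h2a h2b
  -- Bound 3
  have h3 : Q ^ k ≤ (p.choose k : ℝ) := pow_div_le_choose p k hk hkp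
  have h4 : ((p.choose k : ℝ)) ^ (-e) ≤ (Q ^ k) ^ (-e) :=
    Real.rpow_le_rpow_of_nonpos (by positivity) h3 (neg_nonpos.mpr he0)
  have h5 : (Q ^ k) ^ (-e) = Q ^ ((k : ℝ) * (-e)) := by
    rw [← Real.rpow_natCast Q k, ← Real.rpow_mul hQ0.le]
  have h6 : Q ^ ((k : ℝ) * (-e)) ≤ Q ^ (-(7 / 4) * (D : ℝ)) := by
    apply Real.rpow_le_rpow_of_exponent_le hQ1
    rw [hDcast]
    have key : (k : ℝ) * e = ((k : ℝ) - m) * ((k : ℝ) + m) / (k : ℝ) := by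
      rw [he]
      field_simp
      ring
    have h74 : (7 / 4 : ℝ) * ((k : ℝ) - m) ≤ ((k : ℝ) - m) * ((k : ℝ) + m) / (k : ℝ) := by
      rw [le_div_iff₀ hK0]
      nlinarith [mul_nonneg (sub_nonneg.mpr hMK) (by linarith : (0 : ℝ) ≤ 4 * (m : ℝ) - 3 * k)]
    nlinarith [key, h74]
  -- combine
  have hterm : ((k.choose m : ℝ) * ((p - k).choose D : ℝ)) *
      ((p.choose k : ℝ)) ^ (-e) ≤ ((k : ℝ) ^ D * (p : ℝ) ^ D) * Q ^ (-(7 / 4) * (D : ℝ)) := by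
    apply mul_le_mul
    · exact mul_le_mul h1 h2 (by positivity) (by positivity)
    · calc ((p.choose k : ℝ)) ^ (-e) ≤ (Q ^ k) ^ (-e) := h4
        _ = Q ^ ((k : ℝ) * (-e)) := h5
        _ ≤ Q ^ (-(7 / 4) * (D : ℝ)) := h6
    · positivity
    · positivity
  have hfin : ((k : ℝ) ^ D * (p : ℝ) ^ D) * Q ^ (-(7 / 4) * (D : ℝ))
      = ((k : ℝ) ^ ((11 : ℝ) / 4) / (p : ℝ) ^ ((3 : ℝ) / 4)) ^ D := by
    have hq : Q ^ (-(7 / 4) * (D : ℝ)) = (Q ^ (-(7 / 4) : ℝ)) ^ D := by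
      rw [Real.rpow_mul hQ0.le, Real.rpow_natCast]
    rw [hq, ← mul_pow, ← mul_pow]
    congr 1
    have hQval : Q ^ (-(7 / 4) : ℝ) = (k : ℝ) ^ ((7 : ℝ) / 4) / (p : ℝ) ^ ((7 : ℝ) / 4) := by
      rw [hQ, Real.div_rpow hP0.le hK0.le, Real.rpow_neg hP0.le, Real.rpow_neg hK0.le,
        inv_div_inv]
    rw [hQval]
    have hK11 : (k : ℝ) ^ ((11 : ℝ) / 4) = (k : ℝ) * (k : ℝ) ^ ((7 : ℝ) / 4) := by
      rw [show (11 : ℝ) / 4 = 1 + 7 / 4 by norm_num, Real.rpow_add hK0, Real.rpow_one]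
    have hP7 : (p : ℝ) ^ ((7 : ℝ) / 4) = (p : ℝ) * (p : ℝ) ^ ((3 : ℝ) / 4) := by
      rw [show (7 : ℝ) / 4 = 1 + 3 / 4 by norm_num, Real.rpow_add hP0, Real.rpow_one]
    rw [hK11, hP7]
    have hP34 : (0 : ℝ) < (p : ℝ) ^ ((3 : ℝ) / 4) := Real.rpow_pos_of_pos hP0 _
    field_simp
  calc ((k.choose m : ℝ) * ((p - k).choose D : ℝ)) *
        ((p.choose k : ℝ)) ^ (-e)
      ≤ ((k : ℝ) ^ D * (p : ℝ) ^ D) * Q ^ (-(7 / 4) * (D : ℝ)) := hterm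
    _ = ((k : ℝ) ^ ((11 : ℝ) / 4) / (p : ℝ) ^ ((3 : ℝ) / 4)) ^ D := hfin
end
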